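/- arXiv:1609.03371 — 5 statements merged into one kernel-verified Lean document; each statement's English description precedes it below -/
import Mathlib

section
/- If (A,B) and (C,D) are recursively inseparable pairs of c.e. sets, then the pair (A×C, B×D) is recursively inseparable. -/
/-- The c.e. set with index `e` in a standard enumeration. -/
def WSet (e : ℕ) : Set ℕ := {n | ((Denumerable.ofNat Nat.Partrec.Code e).eval n).Dom}

/-- A set of naturals is computably enumerable. -/
def CeSet (A : Set ℕ) : Prop := ∃ e : ℕ, A = WSet e

/-- Product of two sets of naturals under the standard pairing. -/
def ProdSet (A C : Set ℕ) : Set ℕ := {p | p.unpair.1 ∈ A ∧ p.unpair.2 ∈ C}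

/-- `(A, B)` is an effectively inseparable pair. -/
def EffInsep (A B : Set ℕ) : Prop :=
  ∃ ψ : ℕ →. ℕ, Partrec ψ ∧
    ∀ u v : ℕ, A ⊆ WSet u → B ⊆ WSet v → WSet u ∩ WSet v = ∅ →
      ∃ z ∈ ψ (Nat.pair u v), z ∉ WSet u ∪ WSet v
/-- `(A, B)` is a recursively inseparable pair: no computable set separates them. -/
def RecInsep (A B : Set ℕ) : Prop :=
  ¬ ∃ X : Set ℕ, ComputablePred (· ∈ X) ∧ A ⊆ X ∧ B ⊆ Xᶜ

/-!
If a computable `X` separated `A × C` from `B × D`, then no column `{x | ⟨x, y⟩ ∈ X}` could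
separate `A` from `B`, so every `y` has a witness `x` with `x ∈ B` and `⟨x, y⟩ ∈ X`, or `x ∈ A`
and `⟨x, y⟩ ∉ X`. Since `A` and `B` are c.e., such a witness `f y` can be found by a computable
search, and then `{y | ⟨f y, y⟩ ∈ X}` separates `C` from `D`.
-/

open Nat.Partrec Nat.Partrec.Code

theorem mem_WSet_iff_exists_evaln {e n : ℕ} :
    n ∈ WSet e ↔ ∃ s, (evaln s (Denumerable.ofNat Code e) n).isSome := by
  simp only [WSet, Set.mem_ofPred_eq, Part.dom_iff_mem, evaln_complete, Option.isSome_iff_exists,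
    Option.mem_def]
  exact exists_comm

theorem pair_mem_ProdSet {A C : Set ℕ} {x y : ℕ} :
    Nat.pair x y ∈ ProdSet A C ↔ x ∈ A ∧ y ∈ C := by
  simp [ProdSet]

theorem RecInsep.exists_mem_cond {A B : Set ℕ} (h : RecInsep A B) {g : ℕ → Bool}
    (hg : Computable g) : ∃ x, x ∈ cond (g x) B A := by
  by_contra! H
  refine h ⟨{x | g x}, ComputablePred.computable_iff.2 ⟨g, hg, rfl⟩, fun x hx => ?_,
    fun x hx hgx => H x (by simp_all)⟩
  by_contra hgx
  exact H x (by simp_all)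

theorem exists_computable_mem_WSet {e : ℕ → ℕ → ℕ} (he : Computable₂ e)
    (h : ∀ y, ∃ x, x ∈ WSet (e x y)) :
    ∃ f : ℕ → ℕ, Computable f ∧ ∀ y, f y ∈ WSet (e (f y) y) := by
  -- search for `n = ⟨x, s⟩` such that `x` enters `WSet (e x y)` within `s` steps
  let P : ℕ → ℕ → Prop := fun y n =>
    (evaln n.unpair.2 (Denumerable.ofNat Code (e n.unpair.1 y)) n.unpair.1).isSome
  have hP_ex : ∀ y, ∃ n, P y n := fun y => by
    obtain ⟨x, hx⟩ := h y
    obtain ⟨s, hs⟩ := mem_WSet_iff_exists_evaln.1 hx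
    exact ⟨Nat.pair x s, by simpa [P] using hs⟩
  have hP : ComputablePred fun p : ℕ × ℕ => P p.1 p.2 := by
    refine ComputablePred.computable_iff.2 ⟨_, ?_, rfl⟩
    have hx : Computable fun p : ℕ × ℕ => p.2.unpair.1 :=
      Computable.fst.comp (Computable.unpair.comp Computable.snd)
    have hs : Computable fun p : ℕ × ℕ => p.2.unpair.2 :=
      Computable.snd.comp (Computable.unpair.comp Computable.snd)
    have hc : Computable fun p : ℕ × ℕ => Denumerable.ofNat Code (e p.2.unpair.1 p.1) :=
      (Primrec.ofNat Code).to_comp.comp (he.comp hx Computable.fst)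
    exact Primrec.option_isSome.to_comp.comp (primrec_evaln.to_comp.comp ((hs.pair hc).pair hx))
  exact ⟨fun y => (Nat.find (hP_ex y)).unpair.1,
    (Computable.fst.comp Computable.unpair).comp (Computable.find hP hP_ex),
    fun y => mem_WSet_iff_exists_evaln.2 ⟨_, Nat.find_spec (hP_ex y)⟩⟩

theorem stmt2_general (A B C D : Set ℕ)
    (hA : CeSet A) (hB : CeSet B)
    (h1 : RecInsep A B) (h2 : RecInsep C D) :
    RecInsep (ProdSet A C) (ProdSet B D) := by
  obtain ⟨eA, rfl⟩ := hA
  obtain ⟨eB, rfl⟩ := hB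
  rintro ⟨X, hX, hACX, hBDX⟩
  obtain ⟨χ, hχ, hXχ⟩ := ComputablePred.computable_iff.1 hX
  have hmem : ∀ n, n ∈ X ↔ χ n := fun n => iff_of_eq (congrFun hXχ n)
  have hpair : Computable₂ fun x y => χ (Nat.pair x y) := hχ.comp Primrec₂.natPair.to_comp
  have hcol : ∀ y, ∃ x, x ∈ WSet (cond (χ (Nat.pair x y)) eB eA) := fun y => by
    simpa only [← Bool.apply_cond WSet, id] using
      h1.exists_mem_cond (hpair.comp Computable.id (Computable.const y))
  obtain ⟨f, hf, hfcol⟩ := exists_computable_mem_WSet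
    (Computable.cond hpair (Computable.const eB) (Computable.const eA)).to₂ hcol
  refine h2 ⟨{y | χ (Nat.pair (f y) y)}, ComputablePred.computable_iff.2
    ⟨_, hpair.comp hf Computable.id, rfl⟩, fun y hy => ?_, fun y hy hfy => ?_⟩
  · by_contra hfy
    have hfA : f y ∈ WSet eA := by simpa [Bool.eq_false_iff.2 hfy] using hfcol y
    exact hfy ((hmem _).1 (hACX (pair_mem_ProdSet.2 ⟨hfA, hy⟩)))
  · have hfB : f y ∈ WSet eB := by simpa [show χ (Nat.pair (f y) y) from hfy] using hfcol y
    exact hBDX (pair_mem_ProdSet.2 ⟨hfB, hy⟩) ((hmem _).2 hfy)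

theorem stmt2 (A B C D : Set ℕ)
    (hA : CeSet A) (hB : CeSet B) (hC : CeSet C) (hD : CeSet D)
    (hAB : Disjoint A B) (hCD : Disjoint C D)
    (h1 : RecInsep A B) (h2 : RecInsep C D) :
    RecInsep (ProdSet A C) (ProdSet B D) :=
  stmt2_general A B C D hA hB h1 h2
end

section
/- Let G be a group with computable operations, and suppose uv ≠ 1 in G and both pairs ([1]_G,[u]_G) and ([1]_G,[v]_G) are effectively inseparable. Then ([1]_G, [uv]_G) is effectively inseparable. -/
/-!
If `u` or `v` lies in `N`, then `[uv]` coincides with `[v]` or `[u]`. Otherwise `([1], [u])` and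
`([1], [v])` are disjoint c.e. pairs, and Smullyan's argument yields a total computable `f` with
`f [1] ⊆ [1]` and `f [u] ⊆ [v]`: by the recursion theorem take `e` with
`φₑ(x) = ψ(Pₓ, Qₓ)`, where `Pₓ = [1] ∪ {φₑ(x) | x ∈ [u]}` and `Qₓ = [v] ∪ {φₑ(x) | x ∈ [1]}`.
Were `φₑ(x)` undefined or in the wrong class, `Pₓ` and `Qₓ` would be disjoint c.e. supersets of
`[1]` and `[v]`, so `ψ` would produce a point outside both; but that point is `φₑ(x)` itself.
Now `x ↦ x · f(x)` maps `[1]` into `[1]` and `[u]` into `[uv]`, and effective inseparability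
transfers along such computable maps.
-/

open Nat.Partrec (Code)
open Nat.Partrec.Code Encodable Set

@[simp]
theorem Part.assert_some_dom {α : Type*} {p : Prop} {a : α} :
    (Part.assert p fun _ => Part.some a).Dom ↔ p :=
  ⟨fun ⟨h, _⟩ => h, fun h => ⟨h, trivial⟩⟩

theorem REPred.comp {α β : Type*} [Primcodable α] [Primcodable β] {p : β → Prop}
    (hp : REPred p) {f : α → β} (hf : Computable f) : REPred fun a => p (f a) :=
  Partrec.comp hp hf

theorem REPred.and {α : Type*} [Primcodable α] {p q : α → Prop} (hp : REPred p)
    (hq : REPred q) : REPred fun a => p a ∧ q a :=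
  (hp.bind (hq.comp Computable.fst).to₂).of_eq fun a =>
    Part.ext fun _ => by simp [Part.mem_assert_iff]

theorem REPred.or {α : Type*} [Primcodable α] {p q : α → Prop} (hp : REPred p)
    (hq : REPred q) : REPred fun a => p a ∨ q a := by
  obtain ⟨k, hk, H⟩ := Partrec.merge' hp hq
  exact hk.dom_re.of_eq fun a => by simp [(H a).2]

theorem Partrec.mem_re {α : Type*} [Primcodable α] {f : α →. ℕ} (hf : Partrec f) :
    REPred fun q : α × ℕ => q.2 ∈ f q.1 := by
  have heq : ComputablePred fun q : (α × ℕ) × ℕ => q.2 = q.1.2 :=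
    (Primrec.eq.comp Primrec.snd (Primrec.snd.comp Primrec.fst)).computablePred
  exact ((hf.comp Computable.fst).bind heq.to_re.to₂).dom_re.of_eq fun q => by
    simp [Part.dom_iff_mem]

theorem rePred_mem_wSet : REPred fun q : ℕ × ℕ => q.2 ∈ WSet q.1 :=
  (eval_part.comp ((Computable.ofNat Code).comp Computable.fst) Computable.snd).dom_re

theorem CeSet.rePred {A : Set ℕ} (hA : CeSet A) : REPred (· ∈ A) := by
  obtain ⟨e, rfl⟩ := hA
  exact rePred_mem_wSet.comp ((Computable.const e).pair Computable.id)

theorem REPred.exists_computable_wSet {α : Type*} [Primcodable α] {p : α × ℕ → Prop}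
    (hp : REPred p) : ∃ g : α → ℕ, Computable g ∧ ∀ a n, n ∈ WSet (g a) ↔ p (a, n) := by
  obtain ⟨d, hd⟩ := exists_code.1 hp
  refine ⟨fun a => encode (d.curry (encode a)),
    (Primrec.encode.comp (primrec₂_curry.comp (Primrec.const d) Primrec.encode)).to_comp,
    fun a n => ?_⟩
  simp [WSet, Denumerable.ofNat_encode, eval_curry, hd]

theorem exists_computable_wSet_preimage {f : ℕ → ℕ} (hf : Computable f) :
    ∃ g : ℕ → ℕ, Computable g ∧ ∀ w, WSet (g w) = f ⁻¹' WSet w := by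
  have hp : REPred fun q : ℕ × ℕ => f q.2 ∈ WSet q.1 :=
    (rePred_mem_wSet.comp (Computable.fst.pair (hf.comp Computable.snd))).of_eq fun _ => Iff.rfl
  obtain ⟨g, hg, hW⟩ := hp.exists_computable_wSet
  exact ⟨g, hg, fun w => Set.ext (hW w)⟩

theorem EffInsep.of_computable_mapsTo {A B C D : Set ℕ} (h : EffInsep C D) {f : ℕ → ℕ}
    (hf : Computable f) (hC : MapsTo f C A) (hD : MapsTo f D B) : EffInsep A B := by
  obtain ⟨ψ, hψ, hsep⟩ := h
  obtain ⟨g, hg, hW⟩ := exists_computable_wSet_preimage hf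
  refine ⟨fun n => (ψ (Nat.pair (g n.unpair.1) (g n.unpair.2))).map f,
    (hψ.comp (Primrec₂.natPair.to_comp.comp (hg.comp (Computable.fst.comp Computable.unpair))
      (hg.comp (Computable.snd.comp Computable.unpair)))).map (hf.comp Computable.snd).to₂,
    fun a b hA hB hAB => ?_⟩
  have hCa : C ⊆ WSet (g a) := by rw [hW]; exact fun x hx => hA (hC hx)
  have hDb : D ⊆ WSet (g b) := by rw [hW]; exact fun x hx => hB (hD hx)
  have hab : WSet (g a) ∩ WSet (g b) = ∅ := by
    rw [hW, hW, ← preimage_inter, hAB, preimage_empty]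
  obtain ⟨z, hz, hzW⟩ := hsep (g a) (g b) hCa hDb hab
  refine ⟨f z, by simpa using Part.mem_map f hz, ?_⟩
  simpa [hW] using hzW

theorem exists_computable_wSet_union {A D : Set ℕ} (hA : CeSet A) (hD : CeSet D) :
    ∃ g : Code × ℕ → ℕ, Computable g ∧
      ∀ cd x n, n ∈ WSet (g (cd, x)) ↔ n ∈ A ∨ x ∈ D ∧ n ∈ cd.eval x := by
  have hp : REPred fun q : (Code × ℕ) × ℕ => q.2 ∈ A ∨ q.1.2 ∈ D ∧ q.2 ∈ q.1.1.eval q.1.2 :=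
    (hA.rePred.comp Computable.snd).or
      ((hD.rePred.comp (Computable.snd.comp Computable.fst)).and eval_part.mem_re)
  obtain ⟨g, hg, hW⟩ := hp.exists_computable_wSet
  exact ⟨g, hg, fun cd x => hW (cd, x)⟩

theorem EffInsep.exists_computable_mapsTo {A B C D : Set ℕ} (h : EffInsep A B) (hA : CeSet A)
    (hB : CeSet B) (hAB : Disjoint A B) (hC : CeSet C) (hD : CeSet D) (hCD : Disjoint C D) :
    ∃ f : ℕ → ℕ, Computable f ∧ MapsTo f C A ∧ MapsTo f D B := by
  obtain ⟨ψ, hψ, hsep⟩ := h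
  obtain ⟨gA, hgA, hWA⟩ := exists_computable_wSet_union hA hD
  obtain ⟨gB, hgB, hWB⟩ := exists_computable_wSet_union hB hC
  obtain ⟨e, he⟩ := fixed_point₂ (f := fun cd x => ψ (Nat.pair (gA (cd, x)) (gB (cd, x))))
    (hψ.comp (Primrec₂.natPair.to_comp.comp hgA hgB)).to₂
  have hvalue : ∀ x, ∃ y ∈ e.eval x, (x ∈ C → y ∈ A) ∧ (x ∈ D → y ∈ B) := by
    intro x
    by_contra! hbad
    have hdisj : WSet (gA (e, x)) ∩ WSet (gB (e, x)) = ∅ := by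
      ext n
      simp only [mem_inter_iff, hWA, hWB, mem_empty_iff_false, iff_false]
      have := Set.disjoint_left.1 hAB
      have := Set.disjoint_left.1 hCD
      grind
    obtain ⟨z, hz, hzW⟩ := hsep _ _ (fun n hn => (hWA _ _ n).2 (.inl hn))
      (fun n hn => (hWB _ _ n).2 (.inl hn)) hdisj
    rw [← congrFun he x] at hz
    simp only [mem_union, hWA, hWB, not_or, not_and] at hzW
    exact absurd hz (hzW.1.2 (hbad z hz fun hxC => absurd hz (hzW.2.2 hxC)).1)
  choose f hf hfC hfD using hvalue
  exact ⟨f, (eval_part.comp (Computable.const e) Computable.id).of_eq_tot hf, hfC, hfD⟩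

section CodeClass

variable {G : Type*} [Group G] (c : G ≃ ℕ) (N : Subgroup G)

/-- The paper's `[g]`: the codes of the coset `N g`, `G ⧸ N` being the paper's group. -/
def codeClass (g : G) : Set ℕ := {x | c.symm x * g⁻¹ ∈ N}

variable {c N}

@[simp]
theorem mem_codeClass {g : G} {x : ℕ} : x ∈ codeClass c N g ↔ c.symm x * g⁻¹ ∈ N :=
  Iff.rfl

theorem codeClass_eq_of_mul_inv_mem {g h : G} (hgh : g * h⁻¹ ∈ N) :
    codeClass c N g = codeClass c N h := by
  ext x
  have : c.symm x * h⁻¹ = c.symm x * g⁻¹ * (g * h⁻¹) := by group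
  simp only [mem_codeClass, this, N.mul_mem_cancel_right hgh]

theorem disjoint_codeClass_of_mul_inv_notMem {g h : G} (hgh : g * h⁻¹ ∉ N) :
    Disjoint (codeClass c N g) (codeClass c N h) := by
  refine Set.disjoint_left.2 fun x hg hh => hgh ?_
  have : g * h⁻¹ = (c.symm x * g⁻¹)⁻¹ * (c.symm x * h⁻¹) := by group
  exact this ▸ N.mul_mem (N.inv_mem hg) hh

theorem mul_mem_codeClass (hN : N.Normal) {g h : G} {x y : ℕ} (hx : x ∈ codeClass c N g)
    (hy : y ∈ codeClass c N h) : c (c.symm x * c.symm y) ∈ codeClass c N (g * h) := by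
  have : c.symm x * c.symm y * (g * h)⁻¹ = c.symm x * g⁻¹ * (g * (c.symm y * h⁻¹) * g⁻¹) := by
    group
  simp only [mem_codeClass, Equiv.symm_apply_apply, this]
  exact N.mul_mem hx (hN.conj_mem _ hy g)

end CodeClass

theorem stmt10_general (G : Type) [Group G] (c : G ≃ ℕ)
    (hmul : Computable₂ fun a b : ℕ => c (c.symm a * c.symm b))
    (N : Subgroup G) (hN : N.Normal)
    (u v : G)
    (cls : G → Set ℕ) (hcls : ∀ h : G, cls h = {x | c.symm x * h⁻¹ ∈ N})
    (hce : ∀ h : G, CeSet (cls h))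
    (hu : EffInsep (cls 1) (cls u)) (hv : EffInsep (cls 1) (cls v)) :
    EffInsep (cls 1) (cls (u * v)) := by
  obtain rfl : cls = codeClass c N := funext hcls
  by_cases huN : u ∈ N
  · rwa [codeClass_eq_of_mul_inv_mem (g := u * v) (h := v) (by simpa)]
  by_cases hvN : v ∈ N
  · rwa [codeClass_eq_of_mul_inv_mem (g := u * v) (h := u) (by simpa using hN.conj_mem v hvN u)]
  have hdisj {w : G} (hw : w ∉ N) : Disjoint (codeClass c N 1) (codeClass c N w) :=
    disjoint_codeClass_of_mul_inv_notMem (by simpa)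
  obtain ⟨t, ht, ht1, htv⟩ :=
    hv.exists_computable_mapsTo (hce 1) (hce v) (hdisj hvN) (hce 1) (hce u) (hdisj huN)
  refine hu.of_computable_mapsTo (hmul.comp Computable.id ht) (fun x hx => ?_)
    fun x hx => mul_mem_codeClass hN hx (htv hx)
  simpa using mul_mem_codeClass hN hx (ht1 hx)

theorem stmt10 (G : Type) [Group G] (c : G ≃ ℕ)
    (hmul : Computable₂ fun a b : ℕ => c (c.symm a * c.symm b))
    (hinv : Computable fun a : ℕ => c (c.symm a)⁻¹)
    (N : Subgroup G) (hN : N.Normal)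
    (u v : G)
    (cls : G → Set ℕ) (hcls : ∀ h : G, cls h = {x | c.symm x * h⁻¹ ∈ N})
    (hce : ∀ h : G, CeSet (cls h))
    (huv : u * v ∉ N)  -- `uv ≠ 1` in `G`
    (hu : EffInsep (cls 1) (cls u)) (hv : EffInsep (cls 1) (cls v)) :
    EffInsep (cls 1) (cls (u * v)) :=
  stmt10_general G c hmul N hN u v cls hcls hce hu hv
end

section
/- Given any finite set S = {G₁, …, G_r} of finite presentations of groups, let H = ℤ × ∏_{u≤r} (G_u)_{ab} (with its canonical finite presentation obtained by adding commutator relators and the generators of the factors). Then H is not isomorphic to G_u for any u ≤ r. Consequently the isomorphism relation ≅ on finite presentations admits a strong diagonal function. -/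
/-!
A finitely generated abelian group `A` admits no embedding of `ℤ × A`, by comparing torsion-free
ranks. If `ℤ × A` with `A = ∏ᵤ (Gᵤ)_ab` were isomorphic to `Gᵢ`, then `Gᵢ` would be abelian, `A`
finitely generated, and `ℤ × A ≅ Gᵢ ≅ (Gᵢ)_ab` would embed into `A` as the `i`-th coordinate.

For the diagonal function, a presentation with `n` generators has at most `2ⁿ` homomorphisms to
`ℤ/2`, whereas the free group on `m` generators has `2ᵐ`. So the free presentation on one more
generator than all the members of a list together presents a group isomorphic to none of them.
-/

/-- A code for a finite presentation: a number of generators together with a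
finite list of relator words (letters are generator indices with a sign). -/
abbrev Pres : Type := ℕ × List (List (ℕ × Bool))

/-- The group presented by a coded finite presentation: the free group on ℕ
modulo the relators together with relators killing all generators beyond the
first `p.1` (so it is the finitely presented group `⟨x₀,…,x_{p.1 - 1}; p.2⟩`). -/
def GroupOfPres (p : Pres) : Type :=
  PresentedGroup
    ((FreeGroup.mk '' {w | w ∈ p.2} ∪ FreeGroup.of '' {i : ℕ | p.1 ≤ i}) :
      Set (FreeGroup ℕ))

instance (p : Pres) : Group (GroupOfPres p) := by
  unfold GroupOfPres; infer_instance

theorem AddMonoidHom.not_injective_of_int_prod {A : Type*} [AddCommGroup A] [Module.Finite ℤ A]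
    (f : ℤ × A →+ A) : ¬ Function.Injective f := by
  intro hf
  have hle := LinearMap.rank_le_of_injective f.toIntLinearMap hf
  have hge := lift_rank_add_lift_rank_le_rank_prod ℤ ℤ A
  simp only [Module.rank_self, Cardinal.lift_one, Cardinal.lift_uzero] at hge
  obtain ⟨n, hn⟩ := Cardinal.lt_aleph0.1 (Module.rank_lt_aleph0 ℤ A)
  have hcard : ((1 + n : ℕ) : Cardinal) ≤ n := by
    push_cast
    rw [← hn]
    exact hge.trans hle
  exact absurd (Nat.cast_le.mp hcard) (by omega)

theorem MonoidHom.not_injective_of_int_prod {A : Type*} [CommGroup A] [Group.FG A]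
    (f : Multiplicative ℤ × A →* A) : ¬ Function.Injective f := by
  intro hf
  have : Module.Finite ℤ (Additive A) := Module.Finite.iff_addGroup_fg.mpr inferInstance
  let g : ℤ × Additive A →+ Additive A :=
    (MonoidHom.toAdditive f).comp (AddEquiv.prodAdditive (Multiplicative ℤ) A).symm.toAddMonoidHom
  exact g.not_injective_of_int_prod (hf.comp (AddEquiv.prodAdditive _ _).symm.injective)

theorem not_nonempty_int_prod_pi_abelianization_mulEquiv {ι : Type*} (G : ι → Type*)
    [∀ u, Group (G u)] (i : ι) [Group.FG (G i)] :
    ¬ Nonempty ((Multiplicative ℤ × ((u : ι) → Abelianization (G u))) ≃* G i) := by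
  classical
  rintro ⟨e⟩
  have : Group.FG ((u : ι) → Abelianization (G u)) :=
    Group.fg_of_surjective (f := (MonoidHom.snd _ _).comp e.symm.toMonoidHom)
      (Prod.snd_surjective.comp e.symm.surjective)
  let j := (MonoidHom.mulSingle (fun u => Abelianization (G u)) i).comp
    (Abelianization.of.comp e.toMonoidHom)
  refine j.not_injective_of_int_prod ((Pi.mulSingle_injective i).comp fun x y h => ?_)
  -- `e.symm` factors through the abelianization of `G i`, as its target is commutative.
  simpa using congrArg (Abelianization.lift e.symm.toMonoidHom) h

theorem Primrec.list_sum_nat : Primrec fun l : List ℕ => l.sum :=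
  (Primrec.list_foldr .id (.const 0)
    (Primrec.nat_add.comp (Primrec.fst.comp Primrec.snd) (Primrec.snd.comp Primrec.snd)).to₂
    ).of_eq fun _ => rfl

namespace GroupOfPres

def gen (p : Pres) (k : ℕ) : GroupOfPres p := PresentedGroup.of k

theorem gen_eq_one {p : Pres} {k : ℕ} (hk : p.1 ≤ k) : gen p k = 1 :=
  (QuotientGroup.eq_one_iff _).2 (Subgroup.subset_normalClosure (Or.inr ⟨k, hk, rfl⟩))

theorem hom_ext {p : Pres} {Q : Type*} [Group Q] {f g : GroupOfPres p →* Q}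
    (h : ∀ v : Fin p.1, f (gen p v) = g (gen p v)) : f = g :=
  PresentedGroup.ext fun k => by
    by_cases hk : k < p.1
    · exact h ⟨k, hk⟩
    · change f (gen p k) = g (gen p k)
      rw [gen_eq_one (not_lt.1 hk), map_one, map_one]

theorem restrict_gen_injective (p : Pres) (Q : Type*) [Group Q] :
    Function.Injective fun (f : GroupOfPres p →* Q) (v : Fin p.1) => f (gen p v) :=
  fun _ _ h => hom_ext (congrFun h)

theorem restrict_gen_surjective_of_nil (m : ℕ) (Q : Type*) [Group Q] :
    Function.Surjective fun (f : GroupOfPres (m, []) →* Q) (v : Fin m) => f (gen (m, []) v) := by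
  intro x
  let y : ℕ → Q := fun k => if h : k < m then x ⟨k, h⟩ else 1
  have hy : ∀ r ∈ (FreeGroup.mk '' {w | w ∈ ([] : List (List (ℕ × Bool)))} ∪
      FreeGroup.of '' {k : ℕ | m ≤ k}), FreeGroup.lift y r = 1 := by
    rintro _ (⟨w, hw, rfl⟩ | ⟨k, hk, rfl⟩)
    · exact absurd hw List.not_mem_nil
    · have hk : m ≤ k := hk
      simp [y, not_lt.2 hk]
  exact ⟨PresentedGroup.toGroup hy,
    funext fun v => (PresentedGroup.toGroup.of hy).trans (dif_pos v.2)⟩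

theorem le_of_mulEquiv_of_nil {m : ℕ} {p : Pres} (e : GroupOfPres (m, []) ≃* GroupOfPres p) :
    m ≤ p.1 := by
  let Q := Multiplicative (ZMod 2)
  let transfer (x : Fin m → Q) : Fin p.1 → Q := fun v =>
    Function.surjInv (restrict_gen_surjective_of_nil m Q) x (e.symm (gen p v))
  have htransfer : Function.Injective transfer := by
    intro x x' h
    apply Function.injective_surjInv (restrict_gen_surjective_of_nil m Q)
    apply (MonoidHom.cancel_right (f := e.symm.toMonoidHom) e.symm.surjective).1
    exact restrict_gen_injective p Q h
  have hcard := Fintype.card_le_of_injective transfer htransfer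
  simp only [Fintype.card_fun, Fintype.card_fin, Q, Fintype.card_multiplicative, ZMod.card] at hcard
  exact (Nat.pow_le_pow_iff_right (by norm_num)).1 hcard

end GroupOfPres

def diagPres (l : List Pres) : Pres := ((l.map Prod.fst).sum + 1, [])

theorem diagPres_computable : Computable diagPres :=
  (Primrec.pair (Primrec.succ.comp (Primrec.list_sum_nat.comp
    (Primrec.list_map .id (Primrec.fst.comp .snd).to₂))) (.const [])).to_comp

theorem not_nonempty_diagPres_mulEquiv {l : List Pres} {p : Pres} (hp : p ∈ l) :
    ¬ Nonempty (GroupOfPres (diagPres l) ≃* GroupOfPres p) := by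
  rintro ⟨e⟩
  have hgen : (l.map Prod.fst).sum + 1 ≤ p.1 := GroupOfPres.le_of_mulEquiv_of_nil e
  have hle := List.le_sum_of_mem (List.mem_map_of_mem (f := Prod.fst) hp)
  omega

theorem stmt13 (r : ℕ) (G : Fin r → Type)
    [∀ u, Group (G u)] [∀ u, Group.FG (G u)] :
    -- `H = ℤ × ∏_u (G_u)_ab` is isomorphic to no `G_u`
    (∀ i : Fin r,
      ¬ Nonempty ((Multiplicative ℤ × ((u : Fin r) → Abelianization (G u))) ≃* G i)) ∧
    -- consequently, isomorphism of finite presentations admits a strong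
    -- diagonal function
    ∃ δ : List Pres → Pres, Computable δ ∧
      ∀ (l : List Pres) (p : Pres), p ∈ l →
        ¬ Nonempty (GroupOfPres (δ l) ≃* GroupOfPres p) :=
  ⟨fun i => not_nonempty_int_prod_pi_abelianization_mulEquiv G i, diagPres, diagPres_computable,
    fun _ _ => not_nonempty_diagPres_mulEquiv⟩
end

section
/- Every Π⁰₁ equivalence relation E on ω admits a computable binary function f such that x E y if and only if f(x,n) = f(y,n) for all n, and moreover f(x,n) ≤ x for all x, n. -/
/-- A binary relation on ℕ is Π⁰₁: its complement is computably enumerable. -/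
def Pi01Rel (E : ℕ → ℕ → Prop) : Prop :=
  ∃ e : ℕ, ∀ x y : ℕ, ¬ E x y ↔ Nat.pair x y ∈ WSet e

namespace Stmt16Aux

open Nat.Partrec (Code)
open Nat.Partrec.Code

/-- Stage-`s` confirmation that the pair `(x,y)` (in either order) has entered
the c.e. set coded by `e`. -/
def sepB (e s x y : ℕ) : Bool :=
  ((Denumerable.ofNat Code e).evaln s (Nat.pair x y)).isSome ||
  ((Denumerable.ofNat Code e).evaln s (Nat.pair y x)).isSome

/-- "Some live anchor of color `pol` exists at stage `s`" for element `u`,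
given anchor `c` of color `pol` and earlier elements' colors `l`. -/
def liveP (e c : ℕ) (pol : Bool) (l : List Bool) (u s : ℕ) : Bool :=
  (!sepB e s c u) ||
    (List.range u).foldr (fun v r => r || ((!sepB e s v u) && (l.getD v false == pol))) false

def chkF (e a b i : ℕ) (l : List Bool) (u s : ℕ) : Bool :=
  (!sepB e i a b) || !(liveP e a true l u s && liveP e b false l u s)

open Classical in
noncomputable def stepF (e a b i : ℕ) (l : List Bool) (u : ℕ) : Bool :=
  if h : ∃ s, chkF e a b i l u s = true then liveP e a true l u (Nat.find h) else false

noncomputable def sideL (e a b i : ℕ) : ℕ → List Bool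
  | 0 => []
  | u+1 => sideL e a b i u ++ [stepF e a b i (sideL e a b i u) u]

noncomputable def side (e a b i u : ℕ) : Bool := stepF e a b i (sideL e a b i u) u

noncomputable def gB (e u k : ℕ) : Bool :=
  side e k.unpair.1.unpair.1 k.unpair.1.unpair.2 k.unpair.2 u

noncomputable def ffun (e x n : ℕ) : ℕ :=
  Nat.find (⟨x, fun _ _ => rfl⟩ : ∃ z, ∀ m, m ≤ n → gB e z m = gB e x m)

/- ### basic lemmas -/

lemma sideL_length (e a b i u : ℕ) : (sideL e a b i u).length = u := by
  induction u with
  | zero => rfl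
  | succ u ih => simp [sideL, ih]

lemma sideL_getD {e a b i v u : ℕ} (h : v < u) :
    (sideL e a b i u).getD v false = side e a b i v := by
  induction u with
  | zero => omega
  | succ u ih =>
    rcases Nat.lt_succ_iff_lt_or_eq.1 h with h' | rfl
    · rw [sideL, List.getD_append _ _ _ _ (by rw [sideL_length]; exact h'), ih h']
    · rw [sideL]
      have h1 : ∀ (l : List Bool) (x d : Bool), (l ++ [x]).getD l.length d = x := by
        intro l x d
        simp [List.getD_eq_getElem?_getD, List.getElem?_concat_length]
      have h2 := h1 (sideL e a b i v) (stepF e a b i (sideL e a b i v) v) false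
      rw [sideL_length] at h2
      rw [h2]; rfl

lemma foldr_or_any {p : ℕ → Bool} : ∀ (l : List ℕ) (init : Bool),
    l.foldr (fun v r => r || p v) init = (init || l.any p)
  | [], init => by simp
  | v :: l, init => by
    simp only [List.foldr, foldr_or_any l init, List.any_cons]
    cases p v <;> cases init <;> simp

lemma foldr_or_eq_true {p : ℕ → Bool} {u : ℕ} :
    ((List.range u).foldr (fun v r => r || p v) false = true) ↔ ∃ v, v < u ∧ p v = true := by
  rw [foldr_or_any]
  simp [List.any_eq_true, List.mem_range]

lemma liveP_eq_true {e c : ℕ} {pol : Bool} {l : List Bool} {u s : ℕ} :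
    liveP e c pol l u s = true ↔
      sepB e s c u = false ∨ ∃ v, v < u ∧ sepB e s v u = false ∧ l.getD v false = pol := by
  rw [liveP, Bool.or_eq_true_iff, foldr_or_eq_true]
  constructor
  · rintro (h | ⟨v, hv, hc⟩)
    · left; simpa using h
    · right
      rcases Bool.and_eq_true_iff.1 hc with ⟨h1, h2⟩
      exact ⟨v, hv, by simpa using h1, by simpa using h2⟩
  · rintro (h | ⟨v, hv, h1, h2⟩)
    · left; simp [h]
    · right
      refine ⟨v, hv, ?_⟩
      rw [h1, h2]
      simp

lemma sepB_zero (e x y : ℕ) : sepB e 0 x y = false := by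
  rw [sepB]
  have h : ∀ z w : ℕ, ((Denumerable.ofNat Code e).evaln 0 (Nat.pair z w)).isSome = false := by
    intro z w
    cases hh : (Denumerable.ofNat Code e).evaln 0 (Nat.pair z w) with
    | none => rfl
    | some v =>
      have : v ∈ (Denumerable.ofNat Code e).evaln 0 (Nat.pair z w) := hh
      exact absurd (Nat.Partrec.Code.evaln_bound this) (by omega)
  simp [h]

lemma side_eq_of_ex {e a b i u : ℕ} (h : ∃ s, chkF e a b i (sideL e a b i u) u s = true) :
    side e a b i u = liveP e a true (sideL e a b i u) u (Nat.find h) := by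
  rw [side, stepF, dif_pos h]

set_option maxHeartbeats 1000000
section CompPart
/- ### Computability -/

def stepPart (e : ℕ) (q : (ℕ × ℕ × ℕ) × ℕ × List Bool) : Part (List Bool) :=
  (Nat.rfind fun s => Part.some (chkF e q.1.1 q.1.2.1 q.1.2.2 q.2.2 q.2.1 s)).map
    fun s => q.2.2 ++ [liveP e q.1.1 true q.2.2 q.2.1 s]

def sideLPart (e : ℕ) (t : (ℕ × ℕ × ℕ) × ℕ) : Part (List Bool) :=
  t.2.rec (Part.some ([] : List Bool)) fun y IH => IH.bind fun l => stepPart e (t.1, (y, l))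

def gPart (e : ℕ) (p : ℕ × ℕ) : Part Bool :=
  (sideLPart e ((p.2.unpair.1.unpair.1, p.2.unpair.1.unpair.2, p.2.unpair.2), p.1 + 1)).map
    fun l => l.getD p.1 false

def gvecPart (e : ℕ) (r : ℕ × ℕ) : Part (List Bool) :=
  r.2.rec (Part.some ([] : List Bool)) fun m IH =>
    IH.bind fun l => (gPart e (r.1, m)).map fun bb => l ++ [bb]

def fPart (e : ℕ) (p : ℕ × ℕ) : Part ℕ :=
  Nat.rfind fun z =>
    (gvecPart e (z, p.2 + 1)).bind fun l1 =>
      (gvecPart e (p.1, p.2 + 1)).map fun l2 => decide (l1 = l2)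



lemma sepB_primrec (e : ℕ) : Primrec fun t : ℕ × ℕ × ℕ => sepB e t.1 t.2.1 t.2.2 := by
  have hev : Primrec fun w : ℕ × ℕ =>
      ((Denumerable.ofNat Nat.Partrec.Code e).evaln w.1 w.2) :=
    Nat.Partrec.Code.primrec_evaln.comp
      ((Primrec.fst.pair (Primrec.const (Denumerable.ofNat Nat.Partrec.Code e))).pair Primrec.snd)
  have h1 : Primrec fun t : ℕ × ℕ × ℕ =>
      (((Denumerable.ofNat Nat.Partrec.Code e).evaln t.1 (Nat.pair t.2.1 t.2.2)).isSome : Bool) :=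
    Primrec.option_isSome.comp <| hev.comp <| Primrec.fst.pair
      (Primrec₂.natPair.comp (Primrec.fst.comp Primrec.snd) (Primrec.snd.comp Primrec.snd))
  have h2 : Primrec fun t : ℕ × ℕ × ℕ =>
      (((Denumerable.ofNat Nat.Partrec.Code e).evaln t.1 (Nat.pair t.2.2 t.2.1)).isSome : Bool) :=
    Primrec.option_isSome.comp <| hev.comp <| Primrec.fst.pair
      (Primrec₂.natPair.comp (Primrec.snd.comp Primrec.snd) (Primrec.fst.comp Primrec.snd))
  exact (Primrec.dom_bool₂ (· || ·)).comp h1 h2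

lemma liveP_primrec (e : ℕ) (pol : Bool) :
    Primrec fun x : (ℕ × List Bool) × ℕ × ℕ => liveP e x.1.1 pol x.1.2 x.2.1 x.2.2 := by
  have hsep1 : Primrec fun x : (ℕ × List Bool) × ℕ × ℕ => sepB e x.2.2 x.1.1 x.2.1 :=
    (sepB_primrec e).comp <| (Primrec.snd.comp Primrec.snd).pair
      ((Primrec.fst.comp Primrec.fst).pair (Primrec.fst.comp Primrec.snd))
  have hpart1 : Primrec fun x : (ℕ × List Bool) × ℕ × ℕ => !(sepB e x.2.2 x.1.1 x.2.1) :=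
    (Primrec.dom_bool (!·)).comp hsep1
  have hrange : Primrec fun x : (ℕ × List Bool) × ℕ × ℕ => List.range x.2.1 :=
    Primrec.list_range.comp (Primrec.fst.comp Primrec.snd)
  have hstep : Primrec₂ fun (x : (ℕ × List Bool) × ℕ × ℕ) (p : ℕ × Bool) =>
      (p.2 || ((!sepB e x.2.2 p.1 x.2.1) && (x.1.2.getD p.1 false == pol))) := by
    have hs : Primrec fun y : ((ℕ × List Bool) × ℕ × ℕ) × ℕ × Bool =>
        sepB e y.1.2.2 y.2.1 y.1.2.1 :=
      (sepB_primrec e).comp <| (Primrec.snd.comp <| Primrec.snd.comp Primrec.fst).pair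
        ((Primrec.fst.comp Primrec.snd).pair
          (Primrec.fst.comp <| Primrec.snd.comp Primrec.fst))
    have hgetD : Primrec fun y : ((ℕ × List Bool) × ℕ × ℕ) × ℕ × Bool =>
        y.1.1.2.getD y.2.1 false :=
      (Primrec.list_getD false).comp (Primrec.snd.comp <| Primrec.fst.comp Primrec.fst)
        (Primrec.fst.comp Primrec.snd)
    have hbeq : Primrec fun y : ((ℕ × List Bool) × ℕ × ℕ) × ℕ × Bool =>
        (y.1.1.2.getD y.2.1 false == pol) :=
      (Primrec.dom_bool (· == pol)).comp hgetD
    have hns : Primrec fun y : ((ℕ × List Bool) × ℕ × ℕ) × ℕ × Bool =>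
        !sepB e y.1.2.2 y.2.1 y.1.2.1 := (Primrec.dom_bool (!·)).comp hs
    have hand : Primrec fun y : ((ℕ × List Bool) × ℕ × ℕ) × ℕ × Bool =>
        ((!sepB e y.1.2.2 y.2.1 y.1.2.1) && (y.1.1.2.getD y.2.1 false == pol)) :=
      (Primrec.dom_bool₂ (· && ·)).comp hns hbeq
    exact ((Primrec.dom_bool₂ (· || ·)).comp (Primrec.snd.comp Primrec.snd) hand).to₂
  have hfold : Primrec fun x : (ℕ × List Bool) × ℕ × ℕ =>
      (List.range x.2.1).foldr
        (fun v r => r || ((!sepB e x.2.2 v x.2.1) && (x.1.2.getD v false == pol))) false := by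
    exact (Primrec.list_foldr hrange (Primrec.const false) hstep).of_eq fun x => rfl
  exact ((Primrec.dom_bool₂ (· || ·)).comp hpart1 hfold).of_eq fun x => by rw [liveP]

lemma chkF_primrec (e : ℕ) :
    Primrec₂ fun (q : (ℕ × ℕ × ℕ) × ℕ × List Bool) (s : ℕ) =>
      chkF e q.1.1 q.1.2.1 q.1.2.2 q.2.2 q.2.1 s := by
  have p11 : Primrec fun y : ((ℕ × ℕ × ℕ) × ℕ × List Bool) × ℕ => y.1.1 :=
    Primrec.fst.comp Primrec.fst
  have pa : Primrec fun y : ((ℕ × ℕ × ℕ) × ℕ × List Bool) × ℕ => y.1.1.1 :=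
    Primrec.fst.comp p11
  have pbi : Primrec fun y : ((ℕ × ℕ × ℕ) × ℕ × List Bool) × ℕ => y.1.1.2 :=
    Primrec.snd.comp p11
  have pb : Primrec fun y : ((ℕ × ℕ × ℕ) × ℕ × List Bool) × ℕ => y.1.1.2.1 :=
    Primrec.fst.comp pbi
  have pi : Primrec fun y : ((ℕ × ℕ × ℕ) × ℕ × List Bool) × ℕ => y.1.1.2.2 :=
    Primrec.snd.comp pbi
  have p12 : Primrec fun y : ((ℕ × ℕ × ℕ) × ℕ × List Bool) × ℕ => y.1.2 :=
    Primrec.snd.comp Primrec.fst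
  have pu : Primrec fun y : ((ℕ × ℕ × ℕ) × ℕ × List Bool) × ℕ => y.1.2.1 :=
    Primrec.fst.comp p12
  have pl : Primrec fun y : ((ℕ × ℕ × ℕ) × ℕ × List Bool) × ℕ => y.1.2.2 :=
    Primrec.snd.comp p12
  have ps : Primrec fun y : ((ℕ × ℕ × ℕ) × ℕ × List Bool) × ℕ => y.2 := Primrec.snd
  have hesc : Primrec fun y : ((ℕ × ℕ × ℕ) × ℕ × List Bool) × ℕ =>
      !(sepB e y.1.1.2.2 y.1.1.1 y.1.1.2.1) :=
    (Primrec.dom_bool (!·)).comp ((sepB_primrec e).comp (pi.pair (pa.pair pb)))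
  have hT0 := (liveP_primrec e true).comp ((pa.pair pl).pair (pu.pair ps))
  have hT : Primrec fun y : ((ℕ × ℕ × ℕ) × ℕ × List Bool) × ℕ =>
      liveP e y.1.1.1 true y.1.2.2 y.1.2.1 y.2 := hT0.of_eq fun y => rfl
  have hF0 := (liveP_primrec e false).comp ((pb.pair pl).pair (pu.pair ps))
  have hF : Primrec fun y : ((ℕ × ℕ × ℕ) × ℕ × List Bool) × ℕ =>
      liveP e y.1.1.2.1 false y.1.2.2 y.1.2.1 y.2 := hF0.of_eq fun y => rfl
  have hand : Primrec fun y : ((ℕ × ℕ × ℕ) × ℕ × List Bool) × ℕ =>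
      !(liveP e y.1.1.1 true y.1.2.2 y.1.2.1 y.2 && liveP e y.1.1.2.1 false y.1.2.2 y.1.2.1 y.2) :=
    (Primrec.dom_bool (!·)).comp ((Primrec.dom_bool₂ (· && ·)).comp hT hF)
  have hor := (Primrec.dom_bool₂ (· || ·)).comp hesc hand
  have hfinal : Primrec fun y : ((ℕ × ℕ × ℕ) × ℕ × List Bool) × ℕ =>
      chkF e y.1.1.1 y.1.1.2.1 y.1.1.2.2 y.1.2.2 y.1.2.1 y.2 := hor.of_eq fun y => rfl
  exact hfinal.to₂

lemma stepPart_partrec (e : ℕ) : Partrec (stepPart e) := by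
  have hrf : Partrec fun q : (ℕ × ℕ × ℕ) × ℕ × List Bool =>
      Nat.rfind fun s => (Part.some (chkF e q.1.1 q.1.2.1 q.1.2.2 q.2.2 q.2.1 s) : Part Bool) :=
    Partrec.rfind ((chkF_primrec e).to_comp.partrec₂)
  have hmap : Computable₂ fun (q : (ℕ × ℕ × ℕ) × ℕ × List Bool) (s : ℕ) =>
      q.2.2 ++ [liveP e q.1.1 true q.2.2 q.2.1 s] := by
    have p11 : Primrec fun y : ((ℕ × ℕ × ℕ) × ℕ × List Bool) × ℕ => y.1.1 :=
      Primrec.fst.comp Primrec.fst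
    have pa : Primrec fun y : ((ℕ × ℕ × ℕ) × ℕ × List Bool) × ℕ => y.1.1.1 :=
      Primrec.fst.comp p11
    have p12 : Primrec fun y : ((ℕ × ℕ × ℕ) × ℕ × List Bool) × ℕ => y.1.2 :=
      Primrec.snd.comp Primrec.fst
    have pu : Primrec fun y : ((ℕ × ℕ × ℕ) × ℕ × List Bool) × ℕ => y.1.2.1 :=
      Primrec.fst.comp p12
    have pl : Primrec fun y : ((ℕ × ℕ × ℕ) × ℕ × List Bool) × ℕ => y.1.2.2 :=
      Primrec.snd.comp p12
    have hl0 := (liveP_primrec e true).comp ((pa.pair pl).pair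
      (pu.pair (Primrec.snd (α := (ℕ × ℕ × ℕ) × ℕ × List Bool) (β := ℕ))))
    have hl : Primrec fun y : ((ℕ × ℕ × ℕ) × ℕ × List Bool) × ℕ =>
        liveP e y.1.1.1 true y.1.2.2 y.1.2.1 y.2 := hl0.of_eq fun y => rfl
    exact (Primrec.list_concat.comp pl hl).to₂.to_comp
  exact hrf.map hmap

lemma sideLPart_partrec (e : ℕ) : Partrec (sideLPart e) := by
  have hh : Partrec₂ fun (t : (ℕ × ℕ × ℕ) × ℕ) (p : ℕ × List Bool) =>
      stepPart e (t.1, p.1, p.2) :=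
    ((stepPart_partrec e).comp ((Primrec.fst.comp Primrec.fst).pair
      ((Primrec.fst.comp Primrec.snd).pair (Primrec.snd.comp Primrec.snd))).to_comp).to₂
  have := Partrec.nat_rec (f := fun t : (ℕ × ℕ × ℕ) × ℕ => t.2)
    (g := fun _ : (ℕ × ℕ × ℕ) × ℕ => (Part.some ([] : List Bool)))
    (h := fun t p => stepPart e (t.1, p.1, p.2))
    Computable.snd ((Computable.const ([] : List Bool)).partrec) hh
  exact this.of_eq fun t => rfl

lemma gPart_partrec (e : ℕ) : Partrec (gPart e) := by
  have harg : Computable fun p : ℕ × ℕ =>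
      (((p.2.unpair.1.unpair.1, p.2.unpair.1.unpair.2, p.2.unpair.2), p.1 + 1) :
        (ℕ × ℕ × ℕ) × ℕ) := by
    have hu : Primrec fun p : ℕ × ℕ => p.2.unpair := Primrec.unpair.comp Primrec.snd
    have hu1 : Primrec fun p : ℕ × ℕ => p.2.unpair.1.unpair :=
      Primrec.unpair.comp (Primrec.fst.comp hu)
    exact (((Primrec.fst.comp hu1).pair ((Primrec.snd.comp hu1).pair
      (Primrec.snd.comp hu))).pair (Primrec.succ.comp Primrec.fst)).to_comp
  have hmap : Computable₂ fun (p : ℕ × ℕ) (l : List Bool) => l.getD p.1 false :=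
    ((Primrec.list_getD false).comp Primrec.snd (Primrec.fst.comp Primrec.fst)).to₂.to_comp
  exact ((sideLPart_partrec e).comp harg).map hmap

lemma gvecPart_partrec (e : ℕ) : Partrec (gvecPart e) := by
  have hh : Partrec₂ fun (r : ℕ × ℕ) (p : ℕ × List Bool) =>
      (gPart e (r.1, p.1)).map fun bb => p.2 ++ [bb] := by
    have h1 : Partrec fun y : (ℕ × ℕ) × ℕ × List Bool => gPart e (y.1.1, y.2.1) :=
      (gPart_partrec e).comp
        ((Primrec.fst.comp Primrec.fst).pair (Primrec.fst.comp Primrec.snd)).to_comp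
    have h2 : Computable₂ fun (y : (ℕ × ℕ) × ℕ × List Bool) (bb : Bool) => y.2.2 ++ [bb] :=
      (Primrec.list_concat.comp (Primrec.snd.comp <| Primrec.snd.comp Primrec.fst)
        Primrec.snd).to₂.to_comp
    exact (h1.map h2).to₂
  have := Partrec.nat_rec (f := fun r : ℕ × ℕ => r.2)
    (g := fun _ : ℕ × ℕ => (Part.some ([] : List Bool)))
    (h := fun r p => (gPart e (r.1, p.1)).map fun bb => p.2 ++ [bb])
    Computable.snd ((Computable.const ([] : List Bool)).partrec) hh
  exact this.of_eq fun r => rfl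

lemma fPart_partrec (e : ℕ) : Partrec (fPart e) := by
  have hp : Partrec₂ fun (p : ℕ × ℕ) (z : ℕ) =>
      ((gvecPart e (z, p.2 + 1)).bind fun l1 =>
        (gvecPart e (p.1, p.2 + 1)).map fun l2 => (decide (l1 = l2) : Bool)) := by
    have h1 : Partrec fun y : (ℕ × ℕ) × ℕ => gvecPart e (y.2, y.1.2 + 1) :=
      (gvecPart_partrec e).comp
        (Primrec.snd.pair (Primrec.succ.comp <| Primrec.snd.comp Primrec.fst)).to_comp
    have h2 : Partrec₂ fun (y : (ℕ × ℕ) × ℕ) (l1 : List Bool) =>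
        (gvecPart e (y.1.1, y.1.2 + 1)).map fun l2 => (decide (l1 = l2) : Bool) := by
      have h3 : Partrec fun w : ((ℕ × ℕ) × ℕ) × List Bool =>
          gvecPart e (w.1.1.1, w.1.1.2 + 1) :=
        (gvecPart_partrec e).comp
          ((Primrec.fst.comp <| Primrec.fst.comp Primrec.fst).pair
            (Primrec.succ.comp <| Primrec.snd.comp <| Primrec.fst.comp Primrec.fst)).to_comp
      exact (h3.map ((PrimrecPred.decide (Primrec.eq.comp (Primrec.snd.comp Primrec.fst)
        Primrec.snd)).to₂.to_comp)).to₂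
    exact (h1.bind h2).to₂
  exact (Partrec.rfind hp).of_eq fun p => by rw [fPart]


end CompPart

/- ### membership of the actual values in the partial recursive computations -/

lemma mem_stepPart {e a b i u : ℕ}
    (hex : ∃ s, chkF e a b i (sideL e a b i u) u s = true) :
    sideL e a b i (u+1) ∈ stepPart e ((a, b, i), (u, sideL e a b i u)) := by
  show sideL e a b i (u+1) ∈
    (Nat.rfind fun s => Part.some (chkF e a b i (sideL e a b i u) u s)).map
      fun s => sideL e a b i u ++ [liveP e a true (sideL e a b i u) u s]
  have h1 : Nat.find hex ∈ Nat.rfind fun s =>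
      (Part.some (chkF e a b i (sideL e a b i u) u s) : Part Bool) := by
    refine Nat.mem_rfind.2 ?_
    constructor
    · exact Part.mem_some_iff.mpr (Nat.find_spec hex).symm
    · intro m hm
      have h2 := Nat.find_min hex hm
      have h3 : chkF e a b i (sideL e a b i u) u m = false := by
        cases h : chkF e a b i (sideL e a b i u) u m with
        | false => rfl
        | true => exact absurd h h2
      exact Part.mem_some_iff.mpr h3.symm
  have h4 := Part.mem_map
    (fun s => sideL e a b i u ++ [liveP e a true (sideL e a b i u) u s]) h1
  have h5 : sideL e a b i u ++ [liveP e a true (sideL e a b i u) u (Nat.find hex)]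
      = sideL e a b i (u+1) := by
    rw [sideL, stepF, dif_pos hex]
  simpa only [h5] using h4

lemma mem_sideLPart {e a b i : ℕ}
    (hex : ∀ u, ∃ s, chkF e a b i (sideL e a b i u) u s = true) :
    ∀ u, sideL e a b i u ∈ sideLPart e ((a, b, i), u) := by
  intro u
  induction u with
  | zero => exact Part.mem_some _
  | succ u ih =>
    show sideL e a b i (u+1) ∈
      (sideLPart e ((a, b, i), u)).bind fun l => stepPart e ((a, b, i), (u, l))
    exact Part.mem_bind_iff.mpr ⟨sideL e a b i u, ih, mem_stepPart (hex u)⟩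

lemma mem_gPart {e : ℕ}
    (hex : ∀ a b i u, ∃ s, chkF e a b i (sideL e a b i u) u s = true) (u k : ℕ) :
    gB e u k ∈ gPart e (u, k) := by
  show gB e u k ∈
    (sideLPart e ((k.unpair.1.unpair.1, k.unpair.1.unpair.2, k.unpair.2), u + 1)).map
      fun l => l.getD u false
  have h1 := Part.mem_map (fun l : List Bool => l.getD u false)
    (mem_sideLPart (hex k.unpair.1.unpair.1 k.unpair.1.unpair.2 k.unpair.2) (u+1))
  have h2 : (sideL e k.unpair.1.unpair.1 k.unpair.1.unpair.2 k.unpair.2 (u+1)).getD u false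
      = gB e u k := sideL_getD (Nat.lt_succ_self u)
  simpa only [h2] using h1

/-- the total list of g-values below `n` -/
noncomputable def gvec (e z n : ℕ) : List Bool := (List.range n).map fun m => gB e z m

lemma mem_gvecPart {e : ℕ}
    (hex : ∀ a b i u, ∃ s, chkF e a b i (sideL e a b i u) u s = true) (z : ℕ) :
    ∀ n, gvec e z n ∈ gvecPart e (z, n) := by
  intro n
  induction n with
  | zero => exact Part.mem_some _
  | succ n ih =>
    show gvec e z (n+1) ∈
      (gvecPart e (z, n)).bind fun l => (gPart e (z, n)).map fun bb => l ++ [bb]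
    refine Part.mem_bind_iff.mpr ⟨gvec e z n, ih, ?_⟩
    have h1 := Part.mem_map (fun bb : Bool => gvec e z n ++ [bb]) (mem_gPart hex z n)
    have h2 : gvec e z n ++ [gB e z n] = gvec e z (n+1) := by
      rw [gvec, gvec, List.range_succ, List.map_append]
      rfl
    simpa only [h2] using h1

lemma gvec_eq_iff {e z x n : ℕ} :
    gvec e z n = gvec e x n ↔ ∀ m, m < n → gB e z m = gB e x m := by
  rw [gvec, gvec, List.map_inj_left]
  constructor
  · intro h m hm; exact h m (List.mem_range.mpr hm)
  · intro h m hm; exact h m (List.mem_range.mp hm)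

lemma mem_fPart {e : ℕ}
    (hex : ∀ a b i u, ∃ s, chkF e a b i (sideL e a b i u) u s = true) (x n : ℕ) :
    ffun e x n ∈ fPart e (x, n) := by
  show ffun e x n ∈ Nat.rfind fun z =>
    (gvecPart e (z, n + 1)).bind fun l1 =>
      (gvecPart e (x, n + 1)).map fun l2 => decide (l1 = l2)
  have hval : ∀ z : ℕ, (decide (gvec e z (n+1) = gvec e x (n+1)) : Bool) ∈
      (gvecPart e (z, n + 1)).bind fun l1 =>
        (gvecPart e (x, n + 1)).map fun l2 => (decide (l1 = l2) : Bool) := by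
    intro z
    exact Part.mem_bind_iff.mpr ⟨gvec e z (n+1), mem_gvecPart hex z (n+1),
      Part.mem_map _ (mem_gvecPart hex x (n+1))⟩
  refine Nat.mem_rfind.2 ?_
  constructor
  · have heq : gvec e (ffun e x n) (n+1) = gvec e x (n+1) := by
      rw [gvec_eq_iff]
      intro m hm
      exact Nat.find_spec (⟨x, fun _ _ => rfl⟩ :
        ∃ z, ∀ m, m ≤ n → gB e z m = gB e x m) m (Nat.lt_succ_iff.mp hm)
    have := hval (ffun e x n)
    rw [heq] at this
    simpa using this
  · intro m hm
    have hne : ¬ (gvec e m (n+1) = gvec e x (n+1)) := by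
      intro heq
      have h2 := gvec_eq_iff.mp heq
      exact Nat.find_min (⟨x, fun _ _ => rfl⟩ :
        ∃ z, ∀ m, m ≤ n → gB e z m = gB e x m) hm
        (fun k hk => h2 k (Nat.lt_succ_iff.mpr hk))
    have := hval m
    rw [decide_eq_false hne] at this
    exact this

lemma ffun_computable {e : ℕ}
    (hex : ∀ a b i u, ∃ s, chkF e a b i (sideL e a b i u) u s = true) :
    Computable₂ (ffun e) :=
  (fPart_partrec e).of_eq_tot fun p => mem_fPart hex p.1 p.2


end Stmt16Aux


open Stmt16Aux in
theorem stmt16 (E : ℕ → ℕ → Prop) (hE : Equivalence E) (hPi : Pi01Rel E) :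
    ∃ f : ℕ → ℕ → ℕ, Computable₂ f ∧ (∀ x n, f x n ≤ x) ∧
      ∀ x y : ℕ, E x y ↔ ∀ n, f x n = f y n := by
  obtain ⟨e, he⟩ := hPi
  -- ### facts about the approximation of the complement of E
  have hsep_not : ∀ s x y, sepB e s x y = true → ¬ E x y := by
    intro s x y h
    rcases Bool.or_eq_true_iff.1 h with h1 | h1
    · obtain ⟨v, hv⟩ := Option.isSome_iff_exists.1 h1
      have hv' : v ∈ (Denumerable.ofNat Nat.Partrec.Code e).evaln s (Nat.pair x y) := hv
      have hd : ((Denumerable.ofNat Nat.Partrec.Code e).eval (Nat.pair x y)).Dom :=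
        Part.dom_iff_mem.2 ⟨v, Nat.Partrec.Code.evaln_sound hv'⟩
      exact (he x y).mpr hd
    · obtain ⟨v, hv⟩ := Option.isSome_iff_exists.1 h1
      have hv' : v ∈ (Denumerable.ofNat Nat.Partrec.Code e).evaln s (Nat.pair y x) := hv
      have hd : ((Denumerable.ofNat Nat.Partrec.Code e).eval (Nat.pair y x)).Dom :=
        Part.dom_iff_mem.2 ⟨v, Nat.Partrec.Code.evaln_sound hv'⟩
      exact fun hxy => (he y x).mpr hd (hE.symm hxy)
  have hsep_false : ∀ s x y, E x y → sepB e s x y = false := by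
    intro s x y hxy
    cases h : sepB e s x y with
    | false => rfl
    | true => exact absurd hxy (hsep_not s x y h)
  have hsep_ex : ∀ x y, ¬ E x y → ∃ s, sepB e s x y = true := by
    intro x y h
    have hd : ((Denumerable.ofNat Nat.Partrec.Code e).eval (Nat.pair x y)).Dom := (he x y).mp h
    obtain ⟨v, hv⟩ := Part.dom_iff_mem.1 hd
    obtain ⟨k, hk⟩ := Nat.Partrec.Code.evaln_complete.1 hv
    refine ⟨k, ?_⟩
    rw [sepB, Bool.or_eq_true_iff]
    exact Or.inl (Option.isSome_iff_exists.2 ⟨v, hk⟩)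
  have hsep_mono : ∀ {s t x y : ℕ}, s ≤ t → sepB e s x y = true → sepB e t x y = true := by
    intro s t x y hst h
    rcases Bool.or_eq_true_iff.1 h with h1 | h1
    · obtain ⟨v, hv⟩ := Option.isSome_iff_exists.1 h1
      have hv' : v ∈ Nat.Partrec.Code.evaln s (Denumerable.ofNat Nat.Partrec.Code e)
          (Nat.pair x y) := hv
      have := Nat.Partrec.Code.evaln_mono hst hv'
      rw [sepB, Bool.or_eq_true_iff]
      exact Or.inl (Option.isSome_iff_exists.2 ⟨v, this⟩)
    · obtain ⟨v, hv⟩ := Option.isSome_iff_exists.1 h1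
      have hv' : v ∈ Nat.Partrec.Code.evaln s (Denumerable.ofNat Nat.Partrec.Code e)
          (Nat.pair y x) := hv
      have := Nat.Partrec.Code.evaln_mono hst hv'
      rw [sepB, Bool.or_eq_true_iff]
      exact Or.inr (Option.isSome_iff_exists.2 ⟨v, this⟩)
  -- a stage by which all non-partners in a finite list are separated
  have huni : ∀ (L : List ℕ) (u : ℕ), ∃ s, ∀ v ∈ L, ¬ E v u → sepB e s v u = true := by
    intro L u
    induction L with
    | nil => exact ⟨0, by simp⟩
    | cons w L ih =>
      obtain ⟨s, hs⟩ := ih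
      by_cases hw : E w u
      · exact ⟨s, by
          intro v hv hnv
          rcases List.mem_cons.1 hv with rfl | hv
          · exact absurd hw hnv
          · exact hs v hv hnv⟩
      · obtain ⟨t, ht⟩ := hsep_ex w u hw
        refine ⟨max s t, ?_⟩
        intro v hv hnv
        rcases List.mem_cons.1 hv with rfl | hv
        · exact hsep_mono (le_max_right s t) ht
        · exact hsep_mono (le_max_left s t) (hs v hv hnv)
  -- ### the key invariant of the coloring construction
  have main : ∀ a b i, sepB e i a b = true → ∀ u : ℕ,
      (∃ s, chkF e a b i (sideL e a b i u) u s = true) ∧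
      (E a u → side e a b i u = true) ∧ (E b u → side e a b i u = false) ∧
      (∀ v, v < u → E v u → side e a b i v = side e a b i u) := by
    intro a b i hg
    have hab : ¬ E a b := hsep_not i a b hg
    intro u
    induction u using Nat.strong_induction_on with
    | _ u IH =>
    obtain ⟨s0, hs0⟩ := huni (a :: b :: List.range u) u
    have hnotboth : ∀ s, (∀ v ∈ a :: b :: List.range u, ¬ E v u → sepB e s v u = true) →
        ¬ (liveP e a true (sideL e a b i u) u s = true ∧
           liveP e b false (sideL e a b i u) u s = true) := by
      rintro s hs ⟨hT, hF⟩
      have getE : ∀ v, v < u → sepB e s v u = false → E v u := by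
        intro v hv hsv
        by_contra hnv
        rw [hs v (by simp [List.mem_cons, List.mem_range, hv]) hnv] at hsv
        simp at hsv
      have hTc : E a u ∨ ∃ v, v < u ∧ E v u ∧ side e a b i v = true := by
        rcases liveP_eq_true.1 hT with h1 | ⟨v, hv, h1, h2⟩
        · left
          by_contra hna
          rw [hs a (by simp) hna] at h1
          simp at h1
        · exact Or.inr ⟨v, hv, getE v hv h1, by rw [← sideL_getD hv]; exact h2⟩
      have hFc : E b u ∨ ∃ v, v < u ∧ E v u ∧ side e a b i v = false := by
        rcases liveP_eq_true.1 hF with h1 | ⟨v, hv, h1, h2⟩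
        · left
          by_contra hnb
          rw [hs b (by simp) hnb] at h1
          simp at h1
        · exact Or.inr ⟨v, hv, getE v hv h1, by rw [← sideL_getD hv]; exact h2⟩
      -- now the four cases
      rcases hTc with hTa | ⟨v, hv, hEv, hsv⟩ <;> rcases hFc with hFb | ⟨w, hw, hEw, hsw⟩
      · exact hab (hE.trans hTa (hE.symm hFb))
      · -- E a u and side w = false with E w u : then E a w so side w should be true
        have hEaw : E a w := hE.trans hTa (hE.symm hEw)
        rw [(IH w hw).2.1 hEaw] at hsw
        simp at hsw
      · have hEbv : E b v := hE.trans hFb (hE.symm hEv)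
        rw [(IH v hv).2.2.1 hEbv] at hsv
        simp at hsv
      · have hEvw : E v w := hE.trans hEv (hE.symm hEw)
        rcases lt_trichotomy v w with hlt | rfl | hlt
        · rw [(IH w hw).2.2.2 v hlt hEvw, hsw] at hsv
          simp at hsv
        · rw [hsw] at hsv; simp at hsv
        · rw [(IH v hv).2.2.2 w hlt (hE.symm hEvw), hsv] at hsw
          simp at hsw
    have hex : ∃ s, chkF e a b i (sideL e a b i u) u s = true := by
      refine ⟨s0, ?_⟩
      rw [chkF]
      have hand : (liveP e a true (sideL e a b i u) u s0 &&
          liveP e b false (sideL e a b i u) u s0) = false := by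
        cases hT : liveP e a true (sideL e a b i u) u s0 with
        | false => simp
        | true =>
          cases hF : liveP e b false (sideL e a b i u) u s0 with
          | false => simp
          | true => exact absurd ⟨hT, hF⟩ (hnotboth s0 hs0)
      rw [hand]; simp
    have hside := side_eq_of_ex hex
    have hchk := Nat.find_spec hex
    have hand : (liveP e a true (sideL e a b i u) u (Nat.find hex) &&
        liveP e b false (sideL e a b i u) u (Nat.find hex)) = false := by
      rw [chkF, hg] at hchk
      simp only [Bool.not_true, Bool.false_or, Bool.not_eq_true'] at hchk
      exact hchk
    refine ⟨hex, ?_, ?_, ?_⟩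
    · intro hEa
      rw [hside]
      exact liveP_eq_true.2 (Or.inl (hsep_false _ a u hEa))
    · intro hEb
      have hF : liveP e b false (sideL e a b i u) u (Nat.find hex) = true :=
        liveP_eq_true.2 (Or.inl (hsep_false _ b u hEb))
      rw [hside]
      cases hT : liveP e a true (sideL e a b i u) u (Nat.find hex) with
      | false => rfl
      | true => rw [hT, hF] at hand; simp at hand
    · intro v hv hEv
      have hsB : sepB e (Nat.find hex) v u = false := hsep_false _ v u hEv
      have hgd : (sideL e a b i u).getD v false = side e a b i v := sideL_getD hv
      cases hv2 : side e a b i v with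
      | true =>
        rw [hside]
        exact (liveP_eq_true.2 (Or.inr ⟨v, hv, hsB, by rw [hgd, hv2]⟩)).symm ▸ rfl
      | false =>
        have hF : liveP e b false (sideL e a b i u) u (Nat.find hex) = true :=
          liveP_eq_true.2 (Or.inr ⟨v, hv, hsB, by rw [hgd, hv2]⟩)
        rw [hside]
        cases hT : liveP e a true (sideL e a b i u) u (Nat.find hex) with
        | false => rfl
        | true => rw [hT, hF] at hand; simp at hand
  -- when the guard fails the coloring is constantly true
  have side_nog : ∀ a b i u, sepB e i a b = false → side e a b i u = true := by
    intro a b i u hg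
    have h0 : chkF e a b i (sideL e a b i u) u 0 = true := by rw [chkF, hg]; simp
    have hex : ∃ s, chkF e a b i (sideL e a b i u) u s = true := ⟨0, h0⟩
    have hf0 : Nat.find hex = 0 := Nat.le_zero.1 (Nat.find_le h0)
    rw [side_eq_of_ex hex, hf0]
    exact liveP_eq_true.2 (Or.inl (sepB_zero e a u))
  -- ### properties of gB
  have gInv : ∀ u v, E u v → ∀ k, gB e u k = gB e v k := by
    intro u v huv k
    rw [gB, gB]
    set a := k.unpair.1.unpair.1
    set b := k.unpair.1.unpair.2
    set i := k.unpair.2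
    cases hg : sepB e i a b with
    | false => rw [side_nog a b i u hg, side_nog a b i v hg]
    | true =>
      rcases lt_trichotomy u v with hlt | rfl | hlt
      · exact (main a b i hg v).2.2.2 u hlt huv
      · rfl
      · exact ((main a b i hg u).2.2.2 v hlt (hE.symm huv)).symm
  have gSep : ∀ x y, ¬ E x y → ∃ k, gB e x k ≠ gB e y k := by
    intro x y h
    obtain ⟨i, hi⟩ := hsep_ex x y h
    refine ⟨Nat.pair (Nat.pair x y) i, ?_⟩
    rw [gB, gB]
    simp only [Nat.unpair_pair]
    rw [(main x y i hi x).2.1 (hE.refl x), (main x y i hi y).2.2.1 (hE.refl y)]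
    simp
  -- ### properties of ffun
  have hf_le : ∀ x n, ffun e x n ≤ x := by
    intro x n
    exact Nat.find_le (fun _ _ => rfl)
  have hf_inv : ∀ x y n, E x y → ffun e x n = ffun e y n := by
    intro x y n hxy
    have key : ∀ z m, (gB e z m = gB e x m) ↔ (gB e z m = gB e y m) := by
      intro z m; rw [gInv x y hxy m]
    apply le_antisymm
    · apply Nat.find_min'
      intro m hm
      exact (key _ m).2 (Nat.find_spec (⟨y, fun _ _ => rfl⟩ :
        ∃ z, ∀ m, m ≤ n → gB e z m = gB e y m) m hm)
    · apply Nat.find_min'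
      intro m hm
      exact (key _ m).1 (Nat.find_spec (⟨x, fun _ _ => rfl⟩ :
        ∃ z, ∀ m, m ≤ n → gB e z m = gB e x m) m hm)
  have hf_lim : ∀ x, ∃ N z0, E z0 x ∧ ∀ n, N ≤ n → ffun e x n = z0 := by
    intro x
    have : DecidablePred fun z => E z x := fun _ => Classical.propDecidable _
    have hex0 : ∃ z, E z x := ⟨x, hE.refl x⟩
    set z0 := Nat.find hex0 with hz0def
    have hz0 : E z0 x := Nat.find_spec hex0
    have hmin : ∀ v, v < z0 → ¬ E v x := fun v hv => Nat.find_min hex0 hv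
    have hbound : ∀ m : ℕ, (∀ v, v < m → ¬ E v x) →
        ∃ N, ∀ v, v < m → ∃ k, k ≤ N ∧ gB e v k ≠ gB e x k := by
      intro m
      induction m with
      | zero => exact fun _ => ⟨0, fun v hv => absurd hv (by omega)⟩
      | succ m ih =>
        intro hm
        obtain ⟨N, hN⟩ := ih (fun v hv => hm v (by omega))
        obtain ⟨k0, hk0⟩ := gSep m x (hm m (by omega))
        refine ⟨max N k0, ?_⟩
        intro v hv
        rcases Nat.lt_succ_iff_lt_or_eq.1 hv with hv' | rfl
        · obtain ⟨k, hk, hkk⟩ := hN v hv'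
          exact ⟨k, le_trans hk (le_max_left N k0), hkk⟩
        · exact ⟨k0, le_max_right N k0, hk0⟩
    obtain ⟨N, hN⟩ := hbound z0 hmin
    refine ⟨N, z0, hz0, ?_⟩
    intro n hn
    rw [ffun]
    rw [Nat.find_eq_iff]
    constructor
    · intro m _
      exact gInv z0 x hz0 m
    · intro v hv hP
      obtain ⟨k, hk, hkk⟩ := hN v hv
      exact hkk (hP k (le_trans hk hn))
  refine ⟨fun x n => ffun e x n, ?_, hf_le, ?_⟩
  · -- computability
    have hexall : ∀ a b i u, ∃ s, chkF e a b i (sideL e a b i u) u s = true := by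
      intro a b i u
      cases hg : sepB e i a b with
      | true => exact (main a b i hg u).1
      | false => exact ⟨0, by simp [chkF, hg]⟩
    exact ffun_computable hexall
  · intro x y
    constructor
    · intro h n
      exact hf_inv x y n h
    · intro h
      obtain ⟨N1, z1, hz1, h1⟩ := hf_lim x
      obtain ⟨N2, z2, hz2, h2⟩ := hf_lim y
      have : z1 = z2 := by
        rw [← h1 (max N1 N2) (le_max_left _ _), ← h2 (max N1 N2) (le_max_right _ _)]
        exact h (max N1 N2)
      exact hE.trans (hE.symm hz1) (this ▸ hz2)
end

section
/- Let g : ω → ω be an injective computable function, and define permutations of ℤ × ω: σ(⟨x,n⟩) = ⟨x+1,n⟩; τ consisting of the 2-cycles (⟨0,3t+1⟩, ⟨0,3t+2⟩) for each t; and β consisting of the 2-cycles (⟨g(t),3t⟩, ⟨g(t),3t+1⟩) for each t. Writing β_x = σ^x β σ^{−x} and τ_x = σ^x τ σ^{−x}, the following hold for all integers x, y: [β_x, β_y] = 1 and [τ_x, τ_y] = 1; moreover for x ∈ ω, the commutator [σ^x β σ^{−x}, τ] = 1 if and only if x is not in the range of g. -/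
/-!
Conjugating by `σ ^ x` shifts a permutation `x` columns to the left, so a point `(z, n)` is moved
by `β_x` exactly when `(z + x, n)` is moved by `β`. Both `β` and `τ` move, in each row, points of
at most one column, hence distinct shifted copies have disjoint supports and commute. Likewise
`β_x` and `τ` have disjoint supports unless column `x` meets the support of `β`, i.e. `x = g t`;
in that case the two permutations fail to commute at `(0, 3t + 1)`.
-/

open scoped commutatorElement

open Equiv

section ColumnShift

variable {σ : Perm (ℤ × ℕ)}

theorem zpow_apply_of_shift (hσ : ∀ (z : ℤ) (n : ℕ), σ (z, n) = (z + 1, n)) (k z : ℤ) (n : ℕ) :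
    (σ ^ k) (z, n) = (z + k, n) := by
  induction k using Int.induction_on generalizing z with
  | zero => simp
  | succ k ih => rw [zpow_add_one, Perm.mul_apply, hσ, ih, add_right_comm, add_assoc]
  | pred k ih =>
    have hσinv : σ⁻¹ (z, n) = (z - 1, n) := by rw [Perm.inv_eq_iff_eq, hσ, sub_add_cancel]
    rw [zpow_sub_one, Perm.mul_apply, hσinv, ih]
    congr 1
    ring

theorem shiftConj_apply (hσ : ∀ (z : ℤ) (n : ℕ), σ (z, n) = (z + 1, n)) (π : Perm (ℤ × ℕ))
    (x z : ℤ) (n : ℕ) :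
    (σ ^ (-x) * π * σ ^ x) (z, n) = ((π (z + x, n)).1 - x, (π (z + x, n)).2) := by
  rw [Perm.mul_apply, Perm.mul_apply, zpow_apply_of_shift hσ, zpow_apply_of_shift hσ,
    sub_eq_add_neg]

theorem shiftConj_apply_eq_self_iff (hσ : ∀ (z : ℤ) (n : ℕ), σ (z, n) = (z + 1, n))
    (π : Perm (ℤ × ℕ)) (x z : ℤ) (n : ℕ) :
    (σ ^ (-x) * π * σ ^ x) (z, n) = (z, n) ↔ π (z + x, n) = (z + x, n) := by
  rw [shiftConj_apply hσ, Prod.ext_iff, Prod.ext_iff, sub_eq_iff_eq_add]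

theorem commute_shiftConj_of_moved_column_unique (hσ : ∀ (z : ℤ) (n : ℕ), σ (z, n) = (z + 1, n))
    {π : Perm (ℤ × ℕ)}
    (hπ : ∀ (z z' : ℤ) (n : ℕ), π (z, n) ≠ (z, n) → π (z', n) ≠ (z', n) → z = z')
    (x y : ℤ) : Commute (σ ^ (-x) * π * σ ^ x) (σ ^ (-y) * π * σ ^ y) := by
  rcases eq_or_ne x y with rfl | hxy
  · exact Commute.refl _
  refine Perm.Disjoint.commute fun ⟨z, n⟩ => or_iff_not_and_not.mpr fun ⟨hx, hy⟩ => hxy ?_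
  rw [shiftConj_apply_eq_self_iff hσ] at hx hy
  exact add_left_cancel (hπ _ _ n hx hy)

end ColumnShift

section Construction

variable {σ τ β : Perm (ℤ × ℕ)} {g : ℕ → ℕ}

theorem moved_column_unique_of_tripled_rows
    (hβ : ∀ (z : ℤ) (n : ℕ),
      (¬ ∃ t : ℕ, z = (g t : ℤ) ∧ (n = 3 * t ∨ n = 3 * t + 1)) → β (z, n) = (z, n))
    (z z' : ℤ) (n : ℕ) (hz : β (z, n) ≠ (z, n)) (hz' : β (z', n) ≠ (z', n)) : z = z' := by
  obtain ⟨t, rfl, ht⟩ := Not.imp_symm (hβ z n) hz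
  obtain ⟨t', rfl, ht'⟩ := Not.imp_symm (hβ z' n) hz'
  obtain rfl : t = t' := by omega
  rfl

theorem moved_column_unique_of_column_zero
    (hτ : ∀ (z : ℤ) (n : ℕ),
      (¬ ∃ t : ℕ, z = 0 ∧ (n = 3 * t + 1 ∨ n = 3 * t + 2)) → τ (z, n) = (z, n))
    (z z' : ℤ) (n : ℕ) (hz : τ (z, n) ≠ (z, n)) (hz' : τ (z', n) ≠ (z', n)) : z = z' := by
  obtain ⟨_, rfl, _⟩ := Not.imp_symm (hτ z n) hz
  obtain ⟨_, rfl, _⟩ := Not.imp_symm (hτ z' n) hz'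
  rfl

theorem commute_shiftConj_of_not_mem_range (hσ : ∀ (z : ℤ) (n : ℕ), σ (z, n) = (z + 1, n))
    (hτ : ∀ (z : ℤ) (n : ℕ),
      (¬ ∃ t : ℕ, z = 0 ∧ (n = 3 * t + 1 ∨ n = 3 * t + 2)) → τ (z, n) = (z, n))
    (hβ : ∀ (z : ℤ) (n : ℕ),
      (¬ ∃ t : ℕ, z = (g t : ℤ) ∧ (n = 3 * t ∨ n = 3 * t + 1)) → β (z, n) = (z, n))
    {x : ℕ} (hx : x ∉ Set.range g) : Commute (σ ^ (-(x : ℤ)) * β * σ ^ (x : ℤ)) τ := by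
  refine Perm.Disjoint.commute fun ⟨z, n⟩ => or_iff_not_and_not.mpr fun ⟨hβz, hτz⟩ => hx ?_
  rw [shiftConj_apply_eq_self_iff hσ] at hβz
  obtain ⟨t, ht, -⟩ := Not.imp_symm (hβ _ n) hβz
  obtain ⟨-, rfl, -⟩ := Not.imp_symm (hτ z n) hτz
  exact ⟨t, by omega⟩

/-- At `(0, 3t + 1)` the two orders of composition end in different rows: `τ` first leads to
the row `3t + 2` that `β` fixes, `β` first leads to the row `3t` that `τ` fixes. -/
theorem not_commute_shiftConj_of_mem_range (hσ : ∀ (z : ℤ) (n : ℕ), σ (z, n) = (z + 1, n))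
    (hτ1 : ∀ t : ℕ, τ (0, 3 * t + 1) = (0, 3 * t + 2))
    (hτ : ∀ (z : ℤ) (n : ℕ),
      (¬ ∃ t : ℕ, z = 0 ∧ (n = 3 * t + 1 ∨ n = 3 * t + 2)) → τ (z, n) = (z, n))
    (hβ2 : ∀ t : ℕ, β ((g t : ℤ), 3 * t + 1) = ((g t : ℤ), 3 * t))
    (hβ : ∀ (z : ℤ) (n : ℕ),
      (¬ ∃ t : ℕ, z = (g t : ℤ) ∧ (n = 3 * t ∨ n = 3 * t + 1)) → β (z, n) = (z, n))
    (t : ℕ) : ¬ Commute (σ ^ (-(g t : ℤ)) * β * σ ^ (g t : ℤ)) τ := by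
  intro hcomm
  have hβfix : β ((g t : ℤ), 3 * t + 2) = ((g t : ℤ), 3 * t + 2) :=
    hβ _ _ fun ⟨_, _, h⟩ => by omega
  have hτfix : τ (0, 3 * t) = (0, 3 * t) := hτ _ _ fun ⟨_, _, h⟩ => by omega
  have h := DFunLike.congr_fun hcomm.eq (0, 3 * t + 1)
  rw [Perm.mul_apply _ τ, Perm.mul_apply τ, hτ1, shiftConj_apply hσ, shiftConj_apply hσ,
    zero_add, hβfix, hβ2, sub_self, hτfix, Prod.mk.injEq] at h
  omega

end Construction

theorem stmt17_general (g : ℕ → ℕ)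
    (σ τ β : Equiv.Perm (ℤ × ℕ))
    -- σ is the shift to the next column
    (hσ : ∀ (z : ℤ) (n : ℕ), σ (z, n) = (z + 1, n))
    -- τ consists of the 2-cycles (⟨0,3t+1⟩, ⟨0,3t+2⟩)
    (hτ1 : ∀ t : ℕ, τ (0, 3 * t + 1) = (0, 3 * t + 2))
    (hτ : ∀ (z : ℤ) (n : ℕ),
      (¬ ∃ t : ℕ, z = 0 ∧ (n = 3 * t + 1 ∨ n = 3 * t + 2)) → τ (z, n) = (z, n))
    -- β consists of the 2-cycles (⟨g t, 3t⟩, ⟨g t, 3t+1⟩)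
    (hβ2 : ∀ t : ℕ, β ((g t : ℤ), 3 * t + 1) = ((g t : ℤ), 3 * t))
    (hβ : ∀ (z : ℤ) (n : ℕ),
      (¬ ∃ t : ℕ, z = (g t : ℤ) ∧ (n = 3 * t ∨ n = 3 * t + 1)) → β (z, n) = (z, n)) :
    -- with β_x = σ^x β σ^{-x} and τ_x = σ^x τ σ^{-x} (words read left-to-right,
    -- so as functions `β_x = fun s => σ^{-x} (β (σ^x s))`):
    let βx : ℤ → Equiv.Perm (ℤ × ℕ) := fun x => σ ^ (-x) * β * σ ^ x
    let τx : ℤ → Equiv.Perm (ℤ × ℕ) := fun x => σ ^ (-x) * τ * σ ^ x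
    (∀ x y : ℤ, ⁅βx x, βx y⁆ = 1) ∧
    (∀ x y : ℤ, ⁅τx x, τx y⁆ = 1) ∧
    (∀ x : ℕ, ⁅βx (x : ℤ), τ⁆ = 1 ↔ x ∉ Set.range g) := by
  simp only [commutatorElement_eq_one_iff_commute]
  refine ⟨commute_shiftConj_of_moved_column_unique hσ (moved_column_unique_of_tripled_rows hβ),
    commute_shiftConj_of_moved_column_unique hσ (moved_column_unique_of_column_zero hτ),
    fun x => ⟨fun hcomm ⟨t, ht⟩ => ?_, commute_shiftConj_of_not_mem_range hσ hτ hβ⟩⟩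
  subst ht
  exact not_commute_shiftConj_of_mem_range hσ hτ1 hτ hβ2 hβ t hcomm

theorem stmt17 (g : ℕ → ℕ) (hg : Function.Injective g) (hgc : Computable g)
    (σ τ β : Equiv.Perm (ℤ × ℕ))
    -- σ is the shift to the next column
    (hσ : ∀ (z : ℤ) (n : ℕ), σ (z, n) = (z + 1, n))
    -- τ consists of the 2-cycles (⟨0,3t+1⟩, ⟨0,3t+2⟩)
    (hτ1 : ∀ t : ℕ, τ (0, 3 * t + 1) = (0, 3 * t + 2))
    (hτ2 : ∀ t : ℕ, τ (0, 3 * t + 2) = (0, 3 * t + 1))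
    (hτ : ∀ (z : ℤ) (n : ℕ),
      (¬ ∃ t : ℕ, z = 0 ∧ (n = 3 * t + 1 ∨ n = 3 * t + 2)) → τ (z, n) = (z, n))
    -- β consists of the 2-cycles (⟨g t, 3t⟩, ⟨g t, 3t+1⟩)
    (hβ1 : ∀ t : ℕ, β ((g t : ℤ), 3 * t) = ((g t : ℤ), 3 * t + 1))
    (hβ2 : ∀ t : ℕ, β ((g t : ℤ), 3 * t + 1) = ((g t : ℤ), 3 * t))
    (hβ : ∀ (z : ℤ) (n : ℕ),
      (¬ ∃ t : ℕ, z = (g t : ℤ) ∧ (n = 3 * t ∨ n = 3 * t + 1)) → β (z, n) = (z, n)) :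
    -- with β_x = σ^x β σ^{-x} and τ_x = σ^x τ σ^{-x} (words read left-to-right,
    -- so as functions `β_x = fun s => σ^{-x} (β (σ^x s))`):
    let βx : ℤ → Equiv.Perm (ℤ × ℕ) := fun x => σ ^ (-x) * β * σ ^ x
    let τx : ℤ → Equiv.Perm (ℤ × ℕ) := fun x => σ ^ (-x) * τ * σ ^ x
    (∀ x y : ℤ, ⁅βx x, βx y⁆ = 1) ∧
    (∀ x y : ℤ, ⁅τx x, τx y⁆ = 1) ∧
    (∀ x : ℕ, ⁅βx (x : ℤ), τ⁆ = 1 ↔ x ∉ Set.range g) :=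
  stmt17_general g σ τ β hσ hτ1 hτ hβ2 hβ
end
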